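/- arXiv:2202.05003 — 4 statements merged into one kernel-verified Lean document; each statement's English description precedes it below -/
import Mathlib

section
/- Let n ≥ 3 and α = 1/(n−1). Let η be a symmetric positive definite n×n matrix, set ψ = σ_n(λ(η)) > 0 and H = tr(η)/(n−1), and for s = 1,…,n let E^s be arbitrary symmetric n×n matrices. Define ∇_s ψ = Σ_{i,j} σ_n^{ij}(η) E^s_{ij} and ∇_s H = tr(E^s)/(n−1), where σ_n^{ij} = ∂σ_n(λ(η))/∂η_{ij} and σ_n^{ij,pq} = ∂^2 σ_n(λ(η))/∂η_{ij}∂η_{pq}. Then Σ_s Σ_{i,j,p,q} σ_n^{ij,pq}(η) E^s_{ij} E^s_{pq} ≤ (1−α)·(Σ_s (∇_s ψ)^2)/ψ + 2α·(Σ_s ∇_s ψ ∇_s H)/H − (1+α)·ψ·(Σ_s (∇_s H)^2)/H^2. -/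
open scoped BigOperators
noncomputable section

open scoped BigOperators

theorem aux_cs {n : ℕ} (hn : 1 ≤ n) (c d : Fin n → ℝ) (hc : ∀ i, 0 < c i)
    (hcd : ∑ i, c i * d i = 0) :
    (∑ i, d i) ^ 2 ≤ ((n : ℝ) - 1) * ∑ i, (d i) ^ 2 := by
  have hne : (Finset.univ : Finset (Fin n)).Nonempty := by
    simpa [Finset.univ_nonempty_iff, ← Fin.pos_iff_nonempty] using (show 0 < n by omega)
  obtain ⟨k, -, hk⟩ := Finset.exists_max_image Finset.univ c hne
  have hck := hc k
  have h1 : ∑ i ∈ Finset.univ.erase k, (1 - c i / c k) * d i = ∑ i, d i := by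
    rw [Finset.sum_erase (f := fun i => (1 - c i / c k) * d i) Finset.univ
      (show (1 - c k / c k) * d k = 0 by simp [div_self hck.ne'])]
    have : ∑ i, (1 - c i / c k) * d i = ∑ i, d i - (∑ i, c i * d i) / c k := by
      rw [Finset.sum_div, ← Finset.sum_sub_distrib]
      congr 1; ext i; field_simp
    rw [this, hcd]; simp
  have h2 : (∑ i ∈ Finset.univ.erase k, (1 - c i / c k) * d i) ^ 2 ≤
      (∑ i ∈ Finset.univ.erase k, (1 - c i / c k) ^ 2) *
        (∑ i ∈ Finset.univ.erase k, (d i) ^ 2) :=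
    Finset.sum_mul_sq_le_sq_mul_sq (Finset.univ.erase k) (fun i => (1 - c i / c k)) d
  have h3 : (∑ i ∈ Finset.univ.erase k, (1 - c i / c k) ^ 2) ≤ ((n : ℝ) - 1) := by
    calc (∑ i ∈ Finset.univ.erase k, (1 - c i / c k) ^ 2)
        ≤ ∑ i ∈ Finset.univ.erase k, 1 := by
          apply Finset.sum_le_sum
          intro i _
          have h0 : 0 ≤ c i / c k := le_of_lt (div_pos (hc i) hck)
          have h1' : c i / c k ≤ 1 := (div_le_one hck).2 (hk i (Finset.mem_univ i))
          nlinarith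
      _ = ((n : ℝ) - 1) := by
          simp only [Finset.sum_const, nsmul_eq_mul, mul_one,
            Finset.card_erase_of_mem (Finset.mem_univ k), Finset.card_univ, Fintype.card_fin]
          rw [Nat.cast_sub hn]; simp
  have h4 : (∑ i ∈ Finset.univ.erase k, (d i) ^ 2) ≤ ∑ i, (d i) ^ 2 :=
    Finset.sum_le_sum_of_subset_of_nonneg (Finset.erase_subset _ _)
      (fun i _ _ => sq_nonneg _)
  have h5 : (0:ℝ) ≤ ∑ i ∈ Finset.univ.erase k, (d i) ^ 2 :=
    Finset.sum_nonneg fun i _ => sq_nonneg _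
  have h6 : (0:ℝ) ≤ (n:ℝ) - 1 := by
    have : (1:ℝ) ≤ n := by exact_mod_cast hn
    linarith
  calc (∑ i, d i) ^ 2 = (∑ i ∈ Finset.univ.erase k, (1 - c i / c k) * d i) ^ 2 := by rw [h1]
    _ ≤ _ := h2
    _ ≤ ((n : ℝ) - 1) * ∑ i, (d i) ^ 2 := mul_le_mul h3 h4 h5 h6
theorem aux_scalar {n : ℕ} (hn : 3 ≤ n) (μ c : Fin n → ℝ) (hc : ∀ i, 0 < c i)
    (hc1 : ∑ i, c i = 1) :
    (1/((n:ℝ)-1)) * ((∑ i, μ i) - ∑ i, c i * μ i)^2 + (∑ i, c i * μ i)^2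
      ≤ ∑ i, (μ i)^2 := by
  set r : ℝ := ∑ i, c i * μ i with hr
  set d : Fin n → ℝ := fun i => μ i - r with hd
  have hcd : ∑ i, c i * d i = 0 := by
    simp only [hd, mul_sub, Finset.sum_sub_distrib, ← Finset.sum_mul, hc1, ← hr]
    ring
  have key := aux_cs (by omega) c d hc hcd
  have hsd : ∑ i, d i = (∑ i, μ i) - n * r := by
    simp [hd, Finset.sum_sub_distrib, mul_comm]
  have hsd2 : ∑ i, (d i)^2 = (∑ i, (μ i)^2) - 2 * r * (∑ i, μ i) + n * r^2 := by
    have h : ∀ i ∈ Finset.univ, (d i)^2 = (μ i)^2 - (2*r) * μ i + r^2 :=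
      fun i _ => by simp only [hd]; ring
    rw [Finset.sum_congr rfl h, Finset.sum_add_distrib, Finset.sum_sub_distrib,
      ← Finset.mul_sum, Finset.sum_const, Finset.card_univ, Fintype.card_fin,
      nsmul_eq_mul]
  rw [hsd, hsd2] at key
  have hn1 : (0:ℝ) < (n:ℝ) - 1 := by
    have : (3:ℝ) ≤ n := by exact_mod_cast hn
    linarith
  rw [div_mul_eq_mul_div, div_add' _ _ _ hn1.ne', div_le_iff₀ hn1]
  nlinarith [key]
open scoped MatrixOrder in
open Matrix in
theorem aux_diag {n : ℕ} (hn : 3 ≤ n) (η : Matrix (Fin n) (Fin n) ℝ)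
    (hpos : η.PosDef) (E : Matrix (Fin n) (Fin n) ℝ) (hEs : E.IsSymm) :
    ∃ μ c : Fin n → ℝ, (∀ i, 0 < c i) ∧ (∑ i, c i = 1) ∧
      (∀ t : ℝ, (η + t • E).det = η.det * ∏ i, (1 + t * μ i)) ∧
      E.trace = η.trace * ∑ i, c i * μ i := by
  classical
  set B := CFC.sqrt η with hBdef
  have hBB : B * B = η := CFC.sqrt_mul_sqrt_self η hpos.posSemidef.nonneg
  have hBherm : B.IsHermitian := (CFC.sqrt_nonneg η).posSemidef.isHermitian
  have hdetB : IsUnit B.det := by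
    have h2 : B.det * B.det = η.det := by rw [← det_mul, hBB]
    have hη : η.det ≠ 0 := ne_of_gt hpos.det_pos
    exact isUnit_iff_ne_zero.mpr (fun h => hη (by rw [← h2, h, mul_zero]))
  have hBinv : B * B⁻¹ = 1 := mul_nonsing_inv B hdetB
  have hBinv' : B⁻¹ * B = 1 := nonsing_inv_mul B hdetB
  set A := B⁻¹ * E * B⁻¹ with hAdef
  have hEherm : E.IsHermitian := by
    rw [IsHermitian, conjTranspose_eq_transpose_of_trivial]; exact hEs
  have hAherm : A.IsHermitian := by
    rw [IsHermitian, hAdef]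
    simp only [conjTranspose_mul, conjTranspose_nonsing_inv, hBherm.eq, hEherm.eq,
      Matrix.mul_assoc]
  set μ : Fin n → ℝ := hAherm.eigenvalues with hμdef
  set U : Matrix (Fin n) (Fin n) ℝ := (hAherm.eigenvectorUnitary : Matrix (Fin n) (Fin n) ℝ)
    with hUdef
  have hUU : U * star U = 1 := mem_unitaryGroup_iff.mp hAherm.eigenvectorUnitary.2
  have hUU' : star U * U = 1 := mem_unitaryGroup_iff'.mp hAherm.eigenvectorUnitary.2
  have hspec : A = U * diagonal μ * star U := by
    have h := hAherm.spectral_theorem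
    rwa [RCLike.ofReal_real_eq_id, Function.id_comp, Unitary.conjStarAlgAut_apply] at h
  have hEBAB : B * A * B = E := by
    rw [hAdef, ← Matrix.mul_assoc, ← Matrix.mul_assoc, hBinv, Matrix.one_mul,
      Matrix.mul_assoc, hBinv', Matrix.mul_one]
  -- determinant identity
  have hdet : ∀ t : ℝ, (η + t • E).det = η.det * ∏ i, (1 + t * μ i) := by
    intro t
    have h1 : η + t • E = B * (1 + t • A) * B := by
      rw [Matrix.mul_add, Matrix.mul_one, Matrix.add_mul, mul_smul_comm,
        smul_mul_assoc, hBB, hEBAB]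
    have h2 : (1 : Matrix (Fin n) (Fin n) ℝ) + t • A
        = U * (1 + t • diagonal μ) * star U := by
      rw [Matrix.mul_add, Matrix.mul_one, Matrix.add_mul, mul_smul_comm,
        smul_mul_assoc, hUU, ← hspec]
    have h3 : (1 : Matrix (Fin n) (Fin n) ℝ) + t • diagonal μ
        = diagonal (fun i => 1 + t * μ i) := by
      ext i j
      rcases eq_or_ne i j with rfl | hij
      · simp
      · simp [Matrix.one_apply_ne hij, Matrix.diagonal_apply_ne _ hij]
    have h5 : U.det * (star U).det = 1 := by rw [← det_mul, hUU, det_one]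
    have h4 : ((1 : Matrix (Fin n) (Fin n) ℝ) + t • A).det = ∏ i, (1 + t * μ i) := by
      rw [h2, h3, det_mul, det_mul, det_diagonal]
      calc U.det * (∏ i, (1 + t * μ i)) * (star U).det
          = (U.det * (star U).det) * ∏ i, (1 + t * μ i) := by ring
        _ = ∏ i, (1 + t * μ i) := by rw [h5, one_mul]
    have h6 : B.det * B.det = η.det := by rw [← det_mul, hBB]
    rw [h1, det_mul, det_mul, h4, ← h6]; ring
  -- trace identity
  set η' := star U * η * U with hη'def
  have hdiagpos : ∀ i, 0 < η' i i := by
    intro i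
    set x : Fin n → ℝ := fun j => U j i with hxdef
    have hx1 : U *ᵥ Pi.single i 1 = x := by
      ext j; simp [mulVec_single, hxdef]
    have hxne : x ≠ 0 := by
      intro h
      have h0 : star U *ᵥ (U *ᵥ Pi.single i 1) = 0 := by rw [hx1, h, mulVec_zero]
      rw [mulVec_mulVec, hUU', one_mulVec] at h0
      have h1 := congr_fun h0 i
      simp at h1
    have hp := hpos.dotProduct_mulVec_pos hxne
    have heq : η' i i = dotProduct (star x) (η *ᵥ x) := by
      simp only [hη'def, Matrix.mul_apply, mulVec, dotProduct, Matrix.star_apply,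
        star_trivial, Finset.sum_mul, Finset.mul_sum, hxdef]
      rw [Finset.sum_comm]
      exact Finset.sum_congr rfl fun j _ => Finset.sum_congr rfl fun k _ => by ring
    rw [heq]; exact hp
  have htrsum : ∀ M : Matrix (Fin n) (Fin n) ℝ, M.trace = ∑ i, M i i := by
    intro M; rfl
  have htrη' : η'.trace = η.trace := by
    rw [hη'def, trace_mul_cycle, hUU, Matrix.one_mul]
  have hT : 0 < η.trace := by
    rw [← htrη', htrsum]
    exact Finset.sum_pos (fun i _ => hdiagpos i) ⟨⟨0, by omega⟩, Finset.mem_univ _⟩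
  refine ⟨μ, fun i => η' i i / η.trace, fun i => div_pos (hdiagpos i) hT, ?_, hdet, ?_⟩
  · rw [← Finset.sum_div, ← htrsum, htrη', div_self hT.ne']
  · have h5 : E.trace = (η * A).trace := by
      conv_lhs => rw [← hEBAB]
      rw [trace_mul_cycle, hBB]
    have hfin : (η' * diagonal μ).trace = ∑ i, η' i i * μ i := by
      rw [htrsum]
      exact Finset.sum_congr rfl fun i _ => by rw [mul_diagonal]
    have h6 : (η * A).trace = ∑ i, η' i i * μ i := by
      rw [hspec, ← Matrix.mul_assoc, ← Matrix.mul_assoc, trace_mul_comm,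
        ← Matrix.mul_assoc, ← Matrix.mul_assoc]
      exact hfin
    rw [h5, h6, Finset.mul_sum]
    refine Finset.sum_congr rfl fun i _ => ?_
    field_simp
theorem aux_deriv {n : ℕ} (ψ : ℝ) (μ : Fin n → ℝ) :
    deriv (fun t : ℝ => ψ * ∏ i, (1 + t * μ i)) 0 = ψ * ∑ i, μ i ∧
    deriv (fun t : ℝ => deriv (fun τ : ℝ => ψ * ∏ i, (1 + τ * μ i)) t) 0
      = ψ * ((∑ i, μ i)^2 - ∑ i, (μ i)^2) := by
  classical
  have hfac : ∀ (i : Fin n) (t : ℝ), HasDerivAt (fun τ : ℝ => 1 + τ * μ i) (μ i) t :=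
    fun i t => by simpa using ((hasDerivAt_id t).mul_const (μ i)).const_add 1
  have hprod : ∀ (s : Finset (Fin n)) (t : ℝ),
      HasDerivAt (fun τ : ℝ => ∏ i ∈ s, (1 + τ * μ i))
        (∑ i ∈ s, (∏ j ∈ s.erase i, (1 + t * μ j)) * μ i) t := by
    intro s t
    simpa [smul_eq_mul] using HasDerivAt.fun_finsetProd (fun i (_ : i ∈ s) => hfac i t)
  have hg : ∀ t : ℝ, HasDerivAt (fun τ : ℝ => ψ * ∏ i, (1 + τ * μ i))
      (ψ * ∑ i, (∏ j ∈ Finset.univ.erase i, (1 + t * μ j)) * μ i) t :=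
    fun t => (hprod Finset.univ t).const_mul ψ
  have hderiv1 : deriv (fun τ : ℝ => ψ * ∏ i, (1 + τ * μ i))
      = fun t => ψ * ∑ i, (∏ j ∈ Finset.univ.erase i, (1 + t * μ j)) * μ i :=
    funext fun t => (hg t).deriv
  constructor
  · rw [hderiv1]; simp
  · rw [hderiv1]
    have hsum : HasDerivAt
        (fun t : ℝ => ∑ i, (∏ j ∈ Finset.univ.erase i, (1 + t * μ j)) * μ i)
        (∑ i, (∑ j ∈ Finset.univ.erase i,
          (∏ k ∈ (Finset.univ.erase i).erase j, (1 + (0:ℝ) * μ k)) * μ j) * μ i) 0 :=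
      HasDerivAt.fun_sum (fun i _ => (hprod (Finset.univ.erase i) 0).mul_const (μ i))
    rw [(hsum.const_mul ψ).deriv]
    simp only [zero_mul, add_zero, Finset.prod_const_one, one_mul]
    have h1 : ∀ i : Fin n, ∑ j ∈ Finset.univ.erase i, μ j = (∑ j, μ j) - μ i :=
      fun i => Finset.sum_erase_eq_sub (Finset.mem_univ i)
    rw [Finset.sum_congr rfl (fun i _ => by rw [h1 i])]
    rw [Finset.sum_congr rfl (fun i (_ : i ∈ Finset.univ) =>
      (by ring : ((∑ j, μ j) - μ i) * μ i = (∑ j, μ j) * μ i - (μ i)^2)),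
      Finset.sum_sub_distrib, ← Finset.mul_sum]
    ring
theorem aux_trace_pos {n : ℕ} (hn : 3 ≤ n) (η : Matrix (Fin n) (Fin n) ℝ)
    (hpos : η.PosDef) : 0 < η.trace := by
  have hdiag : ∀ i, 0 < η i i := by
    intro i
    have h := hpos.dotProduct_mulVec_pos (x := Pi.single i 1) (by
      intro h
      have := congr_fun h i
      simp at this)
    simpa [dotProduct, Matrix.mulVec, Pi.single_apply, Finset.mul_sum] using h
  have : η.trace = ∑ i, η i i := rfl
  rw [this]
  exact Finset.sum_pos (fun i _ => hdiag i) ⟨⟨0, by omega⟩, Finset.mem_univ _⟩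
/-- the pointwise algebraic content of Lemma 4.2.
Here `σ_n(λ(η)) = det η`, so `σ_n^{ij}(η)[E] = d/dt det(η + tE)|₀` and
`Σ σ_n^{ij,pq} E_ij E_pq = d²/dt² det(η + tE)|₀`.  With `ψ = det η`, `H = tr η/(n-1)`,
`∇_s ψ = d/dt det(η + t Eˢ)|₀`, `∇_s H = tr Eˢ/(n-1)` and `α = 1/(n-1)`:
`Σ_s Σ σ_n^{ij,pq} Eˢ_ij Eˢ_pq ≤ (1-α)(Σ_s (∇_s ψ)²)/ψ + 2α(Σ_s ∇_s ψ ∇_s H)/H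
  - (1+α) ψ (Σ_s (∇_s H)²)/H²`. -/
theorem stmt5 {n : ℕ} (hn : 3 ≤ n) (η : Matrix (Fin n) (Fin n) ℝ)
    (hsymm : η.IsSymm) (hpos : η.PosDef)
    (E : Fin n → Matrix (Fin n) (Fin n) ℝ) (hE : ∀ s, (E s).IsSymm) :
    (∑ s, deriv (fun t : ℝ => deriv (fun τ : ℝ => (η + τ • E s).det) t) 0) ≤
      (1 - 1 / ((n : ℝ) - 1)) *
          (∑ s, (deriv (fun t : ℝ => (η + t • E s).det) 0) ^ 2) / η.det
        + 2 * (1 / ((n : ℝ) - 1)) *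
            (∑ s, (deriv (fun t : ℝ => (η + t • E s).det) 0) * ((E s).trace / ((n : ℝ) - 1)))
            / (η.trace / ((n : ℝ) - 1))
        - (1 + 1 / ((n : ℝ) - 1)) * η.det * (∑ s, ((E s).trace / ((n : ℝ) - 1)) ^ 2)
            / (η.trace / ((n : ℝ) - 1)) ^ 2 := by
  have hψ : 0 < η.det := hpos.det_pos
  have hT : 0 < η.trace := aux_trace_pos hn η hpos
  have hn1 : (0:ℝ) < (n:ℝ) - 1 := by
    have : (3:ℝ) ≤ n := by exact_mod_cast hn
    linarith
  have key : ∀ s : Fin n,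
      deriv (fun t : ℝ => deriv (fun τ : ℝ => (η + τ • E s).det) t) 0 ≤
      (1 - 1 / ((n : ℝ) - 1)) * (deriv (fun t : ℝ => (η + t • E s).det) 0) ^ 2 / η.det
        + 2 * (1 / ((n : ℝ) - 1)) *
            ((deriv (fun t : ℝ => (η + t • E s).det) 0) * ((E s).trace / ((n : ℝ) - 1)))
            / (η.trace / ((n : ℝ) - 1))
        - (1 + 1 / ((n : ℝ) - 1)) * η.det * ((E s).trace / ((n : ℝ) - 1)) ^ 2
            / (η.trace / ((n : ℝ) - 1)) ^ 2 := by
    intro s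
    obtain ⟨μ, c, hc, hc1, hdet, htr⟩ := aux_diag hn η hpos (E s) (hE s)
    have hfun : (fun t : ℝ => (η + t • E s).det)
        = fun t => η.det * ∏ i, (1 + t * μ i) := funext hdet
    obtain ⟨hd1, hd2⟩ := aux_deriv η.det μ
    rw [hfun, hd1, hd2, htr]
    have hkey := aux_scalar hn μ c hc hc1
    set u := ∑ i, μ i with hu
    set r := ∑ i, c i * μ i with hrr
    set w := ∑ i, (μ i)^2 with hw
    have hrhs : (1 - 1/((n:ℝ)-1)) * (η.det * u)^2 / η.det
        + 2 * (1/((n:ℝ)-1)) * ((η.det * u) * ((η.trace * r)/((n:ℝ)-1)))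
            / (η.trace/((n:ℝ)-1))
        - (1 + 1/((n:ℝ)-1)) * η.det * ((η.trace * r)/((n:ℝ)-1))^2
            / (η.trace/((n:ℝ)-1))^2
        = η.det * ((1 - 1/((n:ℝ)-1))*u^2 + 2*(1/((n:ℝ)-1))*u*r
            - (1 + 1/((n:ℝ)-1))*r^2) := by
      field_simp
    rw [hrhs]
    have hlin : (1 - 1/((n:ℝ)-1))*u^2 + 2*(1/((n:ℝ)-1))*u*r - (1 + 1/((n:ℝ)-1))*r^2
        = u^2 - ((1/((n:ℝ)-1))*(u - r)^2 + r^2) := by ring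
    rw [hlin]
    exact mul_le_mul_of_nonneg_left (by linarith [hkey]) hψ.le
  calc (∑ s, deriv (fun t : ℝ => deriv (fun τ : ℝ => (η + τ • E s).det) t) 0)
      ≤ ∑ s, ((1 - 1 / ((n : ℝ) - 1)) *
            (deriv (fun t : ℝ => (η + t • E s).det) 0) ^ 2 / η.det
        + 2 * (1 / ((n : ℝ) - 1)) *
            ((deriv (fun t : ℝ => (η + t • E s).det) 0) * ((E s).trace / ((n : ℝ) - 1)))
            / (η.trace / ((n : ℝ) - 1))
        - (1 + 1 / ((n : ℝ) - 1)) * η.det * ((E s).trace / ((n : ℝ) - 1)) ^ 2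
            / (η.trace / ((n : ℝ) - 1)) ^ 2) := Finset.sum_le_sum (fun s _ => key s)
    _ = _ := by
      rw [Finset.sum_sub_distrib, Finset.sum_add_distrib, ← Finset.sum_div, ← Finset.sum_div,
        ← Finset.sum_div, ← Finset.mul_sum, ← Finset.mul_sum, ← Finset.mul_sum]
end
end

section
/- The function κ ↦ f(κ)^{1/n} is concave on the convex cone Γ. -/
open scoped BigOperators
noncomputable section

/-- `lam κ i = λ_i(κ) = ∑_{j ≠ i} κ_j`. -/
def lam {n : ℕ} (κ : Fin n → ℝ) (i : Fin n) : ℝ := ∑ j ∈ Finset.univ.erase i, κ j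

/-- The open symmetric cone `Γ = {κ : ∀ i, λ_i(κ) > 0}`. -/
def Gamma (n : ℕ) : Set (Fin n → ℝ) := {κ | ∀ i, 0 < lam κ i}

/-- `f(κ) = λ_1(κ) ⋯ λ_n(κ)`. -/
def fcurv {n : ℕ} (κ : Fin n → ℝ) : ℝ := ∏ i, lam κ i

lemma lam_smul_add {n : ℕ} (a b : ℝ) (x y : Fin n → ℝ) (i : Fin n) :
    lam (a • x + b • y) i = a * lam x i + b * lam y i := by
  simp only [lam, Finset.mul_sum, Finset.sum_add_distrib, Pi.add_apply, Pi.smul_apply,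
    smul_eq_mul]

lemma gamma_convex (n : ℕ) : Convex ℝ (Gamma n) := by
  intro x hx y hy a b ha hb hab i
  rw [lam_smul_add]
  rcases ha.eq_or_lt with rfl | ha'
  · simpa using mul_pos (by linarith : (0:ℝ) < b) (hy i)
  rcases hb.eq_or_lt with rfl | hb'
  · simpa using mul_pos ha' (hx i)
  · exact add_pos (mul_pos ha' (hx i)) (mul_pos hb' (hy i))

lemma geo_superadd {n : ℕ} (hn : 0 < n) (c d : Fin n → ℝ) (hc : ∀ i, 0 < c i)
    (hd : ∀ i, 0 < d i) :
    (∏ i, c i) ^ ((1:ℝ)/n) + (∏ i, d i) ^ ((1:ℝ)/n)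
      ≤ (∏ i, (c i + d i)) ^ ((1:ℝ)/n) := by
  set S := fun i => c i + d i with hSdef
  have hS : ∀ i, 0 < S i := fun i => add_pos (hc i) (hd i)
  have hSprod : 0 < ∏ i, S i := Finset.prod_pos fun i _ => hS i
  have hSrpow : 0 < (∏ i, S i) ^ ((1:ℝ)/n) := Real.rpow_pos_of_pos hSprod _
  have hw' : ∑ _i : Fin n, (1:ℝ)/n = 1 := by
    rw [Finset.sum_const, Finset.card_univ, Fintype.card_fin, nsmul_eq_mul]
    field_simp
  have key : ∀ (z : Fin n → ℝ), (∀ i, 0 < z i) →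
      (∏ i, z i) ^ ((1:ℝ)/n) / (∏ i, S i) ^ ((1:ℝ)/n) ≤ ∑ i, (1:ℝ)/n * (z i / S i) := by
    intro z hz
    have h1 := Real.geom_mean_le_arith_mean_weighted Finset.univ (fun _ => (1:ℝ)/n)
      (fun i => z i / S i) (fun i _ => by positivity) hw'
      (fun i _ => le_of_lt (div_pos (hz i) (hS i)))
    have h2 : ∏ i, (z i / S i) ^ ((1:ℝ)/n)
        = (∏ i, z i) ^ ((1:ℝ)/n) / (∏ i, S i) ^ ((1:ℝ)/n) := by
      rw [← Real.div_rpow (Finset.prod_nonneg fun i _ => (hz i).le) hSprod.le,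
        ← Finset.prod_div_distrib,
        ← Real.finset_prod_rpow _ _ (fun i _ => le_of_lt (div_pos (hz i) (hS i)))]
    rw [← h2]
    exact h1
  have hsum : (∑ i, (1:ℝ)/n * (c i / S i)) + (∑ i, (1:ℝ)/n * (d i / S i)) = 1 := by
    rw [← Finset.sum_add_distrib]
    have : ∀ i : Fin n, (1:ℝ)/n * (c i / S i) + (1:ℝ)/n * (d i / S i) = (1:ℝ)/n := by
      intro i
      rw [← mul_add, ← add_div, div_self (hS i).ne']
      ring
    rw [Finset.sum_congr rfl fun i _ => this i]
    exact hw'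
  have := add_le_add (key c hc) (key d hd)
  rw [← add_div] at this
  rw [hsum] at this
  calc (∏ i, c i) ^ ((1:ℝ)/n) + (∏ i, d i) ^ ((1:ℝ)/n)
      ≤ 1 * (∏ i, S i) ^ ((1:ℝ)/n) := by
        rw [← div_le_iff₀ hSrpow] ; exact this
    _ = (∏ i, (c i + d i)) ^ ((1:ℝ)/n) := by rw [one_mul]

/-- `κ ↦ f(κ)^{1/n}` is concave on the convex cone `Γ`. -/
theorem stmt11 {n : ℕ} :
    ConcaveOn ℝ (Gamma n) (fun κ => fcurv κ ^ ((1 : ℝ) / n)) := by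
  rcases Nat.eq_zero_or_pos n with rfl | hn
  · simp only [Nat.cast_zero, div_zero, Real.rpow_zero]
    exact concaveOn_const 1 (gamma_convex 0)
  refine ⟨gamma_convex n, ?_⟩
  intro x hx y hy a b ha hb hab
  rcases ha.eq_or_lt with rfl | ha'
  · simp [show b = 1 by linarith]
  rcases hb.eq_or_lt with rfl | hb'
  · simp [show a = 1 by linarith]
  have hnR : (0:ℝ) < n := by exact_mod_cast hn
  have hc : ∀ i, 0 < a * lam x i := fun i => mul_pos ha' (hx i)
  have hd : ∀ i, 0 < b * lam y i := fun i => mul_pos hb' (hy i)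
  have h1 := geo_superadd hn (fun i => a * lam x i) (fun i => b * lam y i) hc hd
  have hax : ∏ i, (a * lam x i) = a ^ n * ∏ i, lam x i := by
    rw [Finset.prod_mul_distrib, Finset.prod_const, Finset.card_univ, Fintype.card_fin]
  have hby : ∏ i, (b * lam y i) = b ^ n * ∏ i, lam y i := by
    rw [Finset.prod_mul_distrib, Finset.prod_const, Finset.card_univ, Fintype.card_fin]
  have hpown : ∀ t : ℝ, 0 < t → (t ^ n) ^ ((1:ℝ)/n) = t := by
    intro t ht
    rw [← Real.rpow_natCast t n, ← Real.rpow_mul ht.le]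
    rw [mul_one_div, div_self hnR.ne', Real.rpow_one]
  rw [hax, hby,
    Real.mul_rpow (by positivity) (Finset.prod_nonneg fun i _ => (hx i).le),
    Real.mul_rpow (by positivity) (Finset.prod_nonneg fun i _ => (hy i).le),
    hpown a ha', hpown b hb'] at h1
  have heq : ∀ i, lam (a • x + b • y) i = a * lam x i + b * lam y i :=
    lam_smul_add a b x y
  simp only [smul_eq_mul, fcurv]
  calc a * (∏ i, lam x i) ^ ((1:ℝ)/n) + b * (∏ i, lam y i) ^ ((1:ℝ)/n)
      ≤ (∏ i, (a * lam x i + b * lam y i)) ^ ((1:ℝ)/n) := h1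
    _ = (∏ i, lam (a • x + b • y) i) ^ ((1:ℝ)/n) := by
        rw [Finset.prod_congr rfl fun i _ => (heq i).symm]
end
end

section
/- There exists a positive constant δ_0 depending only on n such that for every κ ∈ Γ and every index j with κ_j < 0, one has f_j(κ) ≥ δ_0 Σ_{i=1}^n f_i(κ). -/
open scoped BigOperators
noncomputable section

/-- `λ_k` as a continuous linear map. -/
def lamL (n : ℕ) (k : Fin n) : (Fin n → ℝ) →L[ℝ] ℝ :=
  ∑ j ∈ Finset.univ.erase k, ContinuousLinearMap.proj j

lemma lamL_apply {n : ℕ} (k : Fin n) (v : Fin n → ℝ) : lamL n k v = lam v k := by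
  simp [lamL, lam]

lemma hasFDerivAt_fcurv {n : ℕ} (κ : Fin n → ℝ) :
    HasFDerivAt fcurv
      (∑ k, (∏ m ∈ Finset.univ.erase k, lam κ m) • lamL n k) κ := by
  have h := HasFDerivAt.finset_prod (𝕜 := ℝ) (u := Finset.univ)
    (g := fun (k : Fin n) (κ' : Fin n → ℝ) => lam κ' k) (g' := lamL n) (x := κ)
    (fun k _ => (lamL n k).hasFDerivAt.congr_of_eventuallyEq
      (by filter_upwards with x using (lamL_apply k x).symm))
  have hfun : fcurv = (∏ k ∈ Finset.univ, (fun κ' : Fin n → ℝ => lam κ' k) ·) := by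
    funext x; simp [fcurv]
  rw [hfun]
  exact h

lemma fderiv_fcurv_single {n : ℕ} (κ : Fin n → ℝ) (i : Fin n) :
    fderiv ℝ fcurv κ (Pi.single i 1) =
      ∑ k ∈ Finset.univ.erase i, ∏ m ∈ Finset.univ.erase k, lam κ m := by
  rw [(hasFDerivAt_fcurv κ).fderiv]
  simp only [ContinuousLinearMap.sum_apply, ContinuousLinearMap.smul_apply, lamL_apply,
    smul_eq_mul]
  have hl : ∀ k : Fin n, lam (Pi.single i 1) k = if k ∈ Finset.univ.erase i then 1 else 0 := by
    intro k
    simp only [lam, Pi.single_apply]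
    rw [Finset.sum_ite_eq' (Finset.univ.erase k) i (fun _ => (1:ℝ))]
    simp [Finset.mem_erase, ne_comm]
  simp only [hl, mul_ite, mul_one, mul_zero]
  rw [Finset.sum_ite_mem, Finset.univ_inter]

/-- there is `δ₀ > 0` depending only on `n` such that whenever `κ ∈ Γ` and
`κ_j < 0` one has `f_j(κ) ≥ δ₀ ∑ᵢ f_i(κ)`. -/
theorem stmt13 (n : ℕ) :
    ∃ δ0 : ℝ, 0 < δ0 ∧ ∀ κ ∈ Gamma n, ∀ j : Fin n, κ j < 0 →
      δ0 * ∑ i, fderiv ℝ fcurv κ (Pi.single i 1) ≤ fderiv ℝ fcurv κ (Pi.single j 1) := by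
  refine ⟨1 / (2 * n + 2), by positivity, ?_⟩
  intro κ hκ j hj
  set P : Fin n → ℝ := fun k => ∏ m ∈ Finset.univ.erase k, lam κ m with hP
  have hPpos : ∀ k, 0 < P k := fun k => Finset.prod_pos (fun m _ => hκ m)
  set S : ℝ := ∑ k, P k with hS
  have hSpos : 0 < S := Finset.sum_pos (fun k _ => hPpos k) ⟨j, Finset.mem_univ j⟩
  -- rewrite both sides
  have hsingle : ∀ i, fderiv ℝ fcurv κ (Pi.single i 1) = S - P i := by
    intro i
    rw [fderiv_fcurv_single]
    rw [Finset.sum_erase_eq_sub (Finset.mem_univ i)]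
  have hsum : ∑ i, fderiv ℝ fcurv κ (Pi.single i 1) = (n - 1) * S := by
    rw [Finset.sum_congr rfl (fun i _ => hsingle i), Finset.sum_sub_distrib,
      Finset.sum_const, Finset.card_univ, Fintype.card_fin, ← hS]
    push_cast
    ring
  rw [hsum, hsingle j]
  -- there is k ≠ j with κ k > 0
  obtain ⟨k, hk, hκk⟩ : ∃ k ∈ Finset.univ.erase j, 0 < κ k := by
    by_contra h
    push_neg at h
    have : lam κ j ≤ 0 := Finset.sum_nonpos h
    exact absurd (hκ j) (not_lt.mpr this)
  have hkj : k ≠ j := (Finset.mem_erase.mp hk).1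
  -- λ j > λ k, hence P j ≤ P k
  have hlam : lam κ k ≤ lam κ j := by
    have : lam κ j - lam κ k = κ k - κ j := by
      simp only [lam]
      rw [← Finset.add_sum_erase _ κ (Finset.mem_erase.mpr ⟨hkj, Finset.mem_univ k⟩),
        ← Finset.add_sum_erase _ κ
          (Finset.mem_erase.mpr ⟨hkj.symm, Finset.mem_univ j⟩)]
      rw [Finset.erase_right_comm]
      ring
    nlinarith
  have hPle : P j ≤ P k := by
    have hfj : P j * lam κ j = fcurv κ := by
      rw [hP, fcurv, Finset.prod_erase_mul _ _ (Finset.mem_univ j)]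
    have hfk : P k * lam κ k = fcurv κ := by
      rw [hP, fcurv, Finset.prod_erase_mul _ _ (Finset.mem_univ k)]
    nlinarith [hPpos j, hPpos k, hκ j, hκ k]
  -- P j ≤ S / 2
  have hPjS : 2 * P j ≤ S := by
    have h1 : P j + P k ≤ S := by
      have := Finset.sum_le_sum_of_subset_of_nonneg
        (s := {j, k}) (t := Finset.univ) (f := P)
        (Finset.subset_univ _) (fun m _ _ => (hPpos m).le)
      rwa [Finset.sum_pair (Ne.symm hkj)] at this
    linarith
  -- final arithmetic
  have hcoef : (1 / (2 * (n : ℝ) + 2)) * ((n - 1) * S) ≤ S / 2 := by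
    rw [div_mul_eq_mul_div, one_mul, div_le_div_iff₀ (by positivity) (by norm_num)]
    nlinarith [hSpos.le, Nat.cast_nonneg (α := ℝ) n]
  push_cast
  linarith
end
end

section
/- The second Gårding cone is contained in the cone Γ: if κ ∈ ℝ^n satisfies σ_1(κ) > 0 and σ_2(κ) > 0, then Σ_{j≠i} κ_j > 0 for every i = 1,…,n; that is, Γ_2 ⊂ Γ. -/
open scoped BigOperators
noncomputable section

/-- The `k`-th elementary symmetric polynomial of `κ ∈ ℝ^n`. -/
def esymm (n k : ℕ) (κ : Fin n → ℝ) : ℝ :=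
  ∑ s ∈ Finset.powersetCard k (Finset.univ : Finset (Fin n)), ∏ i ∈ s, κ i

lemma sq_sum_aux {α : Type*} [DecidableEq α] (κ : α → ℝ) (s : Finset α) :
    (∑ i ∈ s, κ i) ^ 2 =
      ∑ i ∈ s, (κ i) ^ 2 + 2 * ∑ t ∈ s.powersetCard 2, ∏ i ∈ t, κ i := by
  induction s using Finset.induction_on with
  | empty => rw [Finset.powersetCard_eq_empty.mpr (by simp)]; simp
  | @insert a s ha ih =>
    rw [Finset.sum_insert ha, Finset.sum_insert ha,
      Finset.powersetCard_succ_insert ha]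
    have hdisj : Disjoint (Finset.powersetCard 2 s)
        ((Finset.powersetCard 1 s).image (insert a)) := by
      rw [Finset.disjoint_right]
      intro t ht ht2
      obtain ⟨u, hu, rfl⟩ := Finset.mem_image.mp ht
      have := Finset.mem_powersetCard.mp ht2
      exact ha (this.1 (Finset.mem_insert_self a u))
    rw [Finset.sum_union hdisj]
    have hinj : Set.InjOn (insert a) ((Finset.powersetCard 1 s : Finset (Finset α)) : Set (Finset α)) := by
      intro t ht u hu h
      have hta : a ∉ t := fun h' => ha ((Finset.mem_powersetCard.mp ht).1 h')
      have hua : a ∉ u := fun h' => ha ((Finset.mem_powersetCard.mp hu).1 h')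
      have : Finset.erase (insert a t) a = Finset.erase (insert a u) a := by rw [h]
      rwa [Finset.erase_insert hta, Finset.erase_insert hua] at this
    rw [Finset.sum_image hinj]
    have hprod : ∀ t ∈ Finset.powersetCard 1 s,
        ∏ i ∈ insert a t, κ i = κ a * ∏ i ∈ t, κ i := by
      intro t ht
      exact Finset.prod_insert (fun h' => ha ((Finset.mem_powersetCard.mp ht).1 h'))
    rw [Finset.sum_congr rfl hprod, ← Finset.mul_sum]
    have h1 : ∑ t ∈ Finset.powersetCard 1 s, ∏ i ∈ t, κ i = ∑ i ∈ s, κ i := by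
      rw [Finset.powersetCard_one, Finset.sum_map]
      simp
    rw [h1]
    ring_nf
    nlinarith [ih]

/-- `Γ_2 ⊆ Γ`: if `σ_1(κ) > 0` and `σ_2(κ) > 0` then
`∑_{j ≠ i} κ_j > 0` for every `i`. -/
theorem stmt19 {n : ℕ} (κ : Fin n → ℝ) (h1 : 0 < esymm n 1 κ) (h2 : 0 < esymm n 2 κ)
    (i : Fin n) : 0 < ∑ j ∈ Finset.univ.erase i, κ j := by
  have he1 : esymm n 1 κ = ∑ j, κ j := by
    unfold esymm
    rw [Finset.powersetCard_one, Finset.sum_map]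
    simp
  have key := sq_sum_aux κ (Finset.univ : Finset (Fin n))
  have hsq : ∑ j, (κ j) ^ 2 ≥ (κ i) ^ 2 :=
    Finset.single_le_sum (f := fun j => (κ j) ^ 2) (fun j _ => sq_nonneg _)
      (Finset.mem_univ i)
  have herase : ∑ j ∈ Finset.univ.erase i, κ j = (∑ j, κ j) - κ i := by
    rw [Finset.sum_erase_eq_sub (Finset.mem_univ i)]
  rw [herase]
  by_contra h
  push_neg at h
  have hS : 0 < ∑ j, κ j := he1 ▸ h1
  have hki : κ i ≥ ∑ j, κ j := by linarith
  have h2' : 0 < ∑ t ∈ Finset.univ.powersetCard 2, ∏ j ∈ t, κ j := h2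
  nlinarith [key, hsq, hki, hS]
end
end
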